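/- Among all probability densities $q'$ equivalent to $p$ satisfying the linear constraint $\mathbb{E}_{q'}[dX] = 0$, the density $q = wp$ with $w = e^{-\lambda a^*\cdot dX}/\mathbb{E}_p[e^{-\lambda a^*\cdot dX}]$ (where $a^*$ is the exponential-utility optimizer) satisfies $D_{KL}(q\|p) \le D_{KL}(q'\|p)$. -/

import Mathlib

open MeasureTheory ProbabilityTheory Real
open scoped RealInnerProductSpace

/-!
Write `g = -λ ⟪a*, dX⟫`, so that `w = exp g / Z` with `Z = ∫ exp g`. Expected exponential utility
along the ray `t • a*` equals `(1 - mgf g t) / λ`, so `t = 1` minimizes the moment generating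
function of `g`; since `g` is bounded, `mgf g` is differentiable and the first-order condition
reads `∫ g exp g = 0`, i.e. `∫ w g = 0`. Hence `∫ w log w = ∫ w g - log Z = -log Z`.
On the other hand, `log x ≤ x - 1` applied to `w / q'` gives the Gibbs variational inequality
`∫ q' g - log Z ≤ ∫ q' log q'` for every probability density `q'`, and the martingale constraint
makes `∫ q' g = 0`.
-/

section Gibbs

variable {Ω : Type*} [MeasurableSpace Ω] {μ : Measure Ω} [NeZero μ] {g q : Ω → ℝ}

theorem integral_mul_log_tilted (hg : Integrable (fun ω => exp (g ω)) μ)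
    (hge : Integrable (fun ω => g ω * exp (g ω)) μ) :
    ∫ ω, exp (g ω) / (∫ ω', exp (g ω') ∂μ) * log (exp (g ω) / ∫ ω', exp (g ω') ∂μ) ∂μ =
      (∫ ω, g ω * exp (g ω) ∂μ) / (∫ ω, exp (g ω) ∂μ) - log (∫ ω, exp (g ω) ∂μ) := by
  set Z := ∫ ω, exp (g ω) ∂μ
  have hZ : 0 < Z := integral_exp_pos hg
  have hpt : ∀ ω, exp (g ω) / Z * log (exp (g ω) / Z) =
      g ω * exp (g ω) / Z - log Z * (exp (g ω) / Z) := fun ω => by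
    rw [log_div (exp_ne_zero _) hZ.ne', log_exp]; ring
  simp_rw [hpt]
  rw [integral_sub (hge.div_const Z) ((hg.div_const Z).const_mul _), integral_const_mul,
    integral_div, integral_div, div_self hZ.ne', mul_one]

theorem integral_mul_sub_log_integral_exp_le (hg : Integrable (fun ω => exp (g ω)) μ)
    (hq_pos : ∀ ω, 0 < q ω) (hq_one : ∫ ω, q ω ∂μ = 1)
    (hqg : Integrable (fun ω => q ω * g ω) μ) (hqlogq : Integrable (fun ω => q ω * log (q ω)) μ) :
    ∫ ω, q ω * g ω ∂μ - log (∫ ω, exp (g ω) ∂μ) ≤ ∫ ω, q ω * log (q ω) ∂μ := by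
  set Z := ∫ ω, exp (g ω) ∂μ
  have hZ : 0 < Z := integral_exp_pos hg
  have hq : Integrable q μ := .of_integral_ne_zero (by simp [hq_one])
  have hpt : ∀ ω, q ω * g ω - log Z * q ω + (q ω - exp (g ω) / Z) ≤ q ω * log (q ω) := by
    intro ω
    have hw : 0 < exp (g ω) / Z := div_pos (exp_pos _) hZ
    have h := log_le_sub_one_of_pos (div_pos hw (hq_pos ω))
    rw [log_div hw.ne' (hq_pos ω).ne', log_div (exp_ne_zero _) hZ.ne', log_exp] at h
    have h' := mul_le_mul_of_nonneg_left h (hq_pos ω).le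
    rw [mul_sub_one, mul_div_cancel₀ _ (hq_pos ω).ne'] at h'
    linarith
  have hA : Integrable (fun ω => q ω * g ω - log Z * q ω) μ := hqg.sub (hq.const_mul _)
  have hB : Integrable (fun ω => q ω - exp (g ω) / Z) μ := hq.sub (hg.div_const Z)
  calc ∫ ω, q ω * g ω ∂μ - log Z
      = ∫ ω, q ω * g ω - log Z * q ω + (q ω - exp (g ω) / Z) ∂μ := by
        rw [integral_add hA hB, integral_sub hqg (hq.const_mul _),
          integral_sub hq (hg.div_const Z), integral_const_mul,
          integral_div, hq_one, div_self hZ.ne']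
        ring
    _ ≤ ∫ ω, q ω * log (q ω) ∂μ := integral_mono (hA.add hB) hqlogq hpt

end Gibbs

section MGF

variable {Ω : Type*} [MeasurableSpace Ω] {μ : Measure Ω} {X : Ω → ℝ} {C : ℝ}

theorem integrableExpSet_eq_univ_of_abs_le [IsFiniteMeasure μ] (hX : AEMeasurable X μ)
    (hC : ∀ ω, |X ω| ≤ C) :
    integrableExpSet X μ = Set.univ :=
  Set.eq_univ_of_forall fun _ =>
    integrable_exp_mul_of_mem_Icc hX (ae_of_all _ fun ω => abs_le.mp (hC ω))

theorem integral_mul_exp_eq_zero_of_isMinOn_mgf [IsFiniteMeasure μ] (hX : AEMeasurable X μ)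
    (hC : ∀ ω, |X ω| ≤ C) {t : ℝ} (hmin : IsMinOn (mgf X μ) Set.univ t) :
    ∫ ω, X ω * exp (t * X ω) ∂μ = 0 :=
  (hmin.isLocalMin Filter.univ_mem).hasDerivAt_eq_zero
    (hasDerivAt_mgf (by simp [integrableExpSet_eq_univ_of_abs_le hX hC]))

theorem integral_mul_exp_eq_zero_of_expUtility_le [IsProbabilityMeasure μ]
    (hX : AEMeasurable X μ) (hC : ∀ ω, |X ω| ≤ C) {lam : ℝ} (hlam : 0 < lam)
    (hmax : ∀ t : ℝ, ∫ ω, (1 - exp (t * X ω)) / lam ∂μ ≤ ∫ ω, (1 - exp (X ω)) / lam ∂μ) :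
    ∫ ω, X ω * exp (X ω) ∂μ = 0 := by
  have hX_exp : ∀ t, Integrable (fun ω => exp (t * X ω)) μ := fun t =>
    integrable_exp_mul_of_mem_Icc hX (ae_of_all _ fun ω => abs_le.mp (hC ω))
  have hutility : ∀ t, ∫ ω, (1 - exp (t * X ω)) / lam ∂μ = (1 - mgf X μ t) / lam := fun t => by
    rw [integral_div, integral_sub (integrable_const 1) (hX_exp t), mgf]
    simp
  have hmin : IsMinOn (mgf X μ) Set.univ 1 := isMinOn_univ_iff.mpr fun t => by
    have h := hmax t
    have h_one := hutility 1
    simp only [one_mul] at h_one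
    rw [hutility, h_one, div_le_div_iff_of_pos_right hlam] at h
    linarith
  simpa using integral_mul_exp_eq_zero_of_isMinOn_mgf hX hC hmin

end MGF

theorem integral_mul_inner_eq_zero {Ω E : Type*} [MeasurableSpace Ω] {μ : Measure Ω}
    [NormedAddCommGroup E] [InnerProductSpace ℝ E] [CompleteSpace E] {q : Ω → ℝ} {Y : Ω → E}
    (hqY : Integrable (fun ω => q ω • Y ω) μ) (h : ∫ ω, q ω • Y ω ∂μ = 0) (a : E) :
    ∫ ω, q ω * ⟪a, Y ω⟫ ∂μ = 0 := by
  simp_rw [← real_inner_smul_right]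
  rw [integral_inner hqY, h, inner_zero_right]

/-- Minimal entropy martingale measure in one period: among all positive densities
`q'` (w.r.t. the physical measure `P`) satisfying the martingale constraint
`E_{q'}[dX] = 0`, the exponentially tilted density
`w = exp (-λ ⟪a*, dX⟫) / E_P[exp (-λ ⟪a*, dX⟫)]`, with `a*` the exponential-utility
optimizer, minimizes the relative entropy: `D_KL(q ‖ p) ≤ D_KL(q' ‖ p)`. -/
theorem stmt_11 {Ω : Type*} [MeasurableSpace Ω] (P : Measure Ω) [IsProbabilityMeasure P]
    {d : ℕ} (dX : Ω → EuclideanSpace ℝ (Fin d)) (hdX_meas : Measurable dX)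
    (hdX_bdd : ∃ C : ℝ, ∀ ω, ‖dX ω‖ ≤ C)
    (lam : ℝ) (hlam : 0 < lam)
    (u : ℝ → ℝ) (hu : u = fun x => (1 - Real.exp (-lam * x)) / lam)
    (astar : EuclideanSpace ℝ (Fin d))
    -- `a*` is an (interior) optimum of the expected exponential utility:
    (hmax : ∀ a : EuclideanSpace ℝ (Fin d),
      ∫ ω, u ⟪a, dX ω⟫ ∂P ≤ ∫ ω, u ⟪astar, dX ω⟫ ∂P)
    (Z : ℝ) (hZ : Z = ∫ ω, Real.exp (-lam * ⟪astar, dX ω⟫) ∂P)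
    (w : Ω → ℝ) (hw : w = fun ω => Real.exp (-lam * ⟪astar, dX ω⟫) / Z) :
    ∀ q' : Ω → ℝ, Measurable q' → (∀ ω, 0 < q' ω) →
      (∫ ω, q' ω ∂P = 1) →
      (∫ ω, q' ω • dX ω ∂P = 0) →
      Integrable (fun ω => q' ω * Real.log (q' ω)) P →
      ∫ ω, w ω * Real.log (w ω) ∂P ≤ ∫ ω, q' ω * Real.log (q' ω) ∂P := by
  intro q _ hq_pos hq_one hq_mart hq_ent
  obtain ⟨C, hC⟩ := hdX_bdd
  set g : Ω → ℝ := fun ω => -lam * ⟪astar, dX ω⟫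
  have hg_meas : Measurable g := (measurable_const.inner hdX_meas).const_mul _
  have hg_bdd : ∀ ω, |g ω| ≤ lam * (‖astar‖ * C) := fun ω => by
    rw [abs_mul, abs_neg, abs_of_pos hlam]
    exact mul_le_mul_of_nonneg_left ((abs_real_inner_le_norm _ _).trans
      (mul_le_mul_of_nonneg_left (hC ω) (norm_nonneg _))) hlam.le
  have hg_norm : ∀ᵐ ω ∂P, ‖g ω‖ ≤ lam * (‖astar‖ * C) :=
    ae_of_all _ fun ω => (Real.norm_eq_abs _).trans_le (hg_bdd ω)
  have hfoc : ∫ ω, g ω * exp (g ω) ∂P = 0 :=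
    integral_mul_exp_eq_zero_of_expUtility_le hg_meas.aemeasurable hg_bdd hlam fun t => by
      simpa only [hu, real_inner_smul_left, mul_left_comm] using hmax (t • astar)
  have hq : Integrable q P := .of_integral_ne_zero (by simp [hq_one])
  have hqg : ∫ ω, q ω * g ω ∂P = 0 := by
    simp_rw [g, mul_left_comm (q _), integral_const_mul]
    rw [integral_mul_inner_eq_zero (hq.smul_bdd C hdX_meas.aestronglyMeasurable (ae_of_all _ hC))
      hq_mart, mul_zero]
  have he : Integrable (fun ω => exp (g ω)) P := by
    simpa using integrable_exp_mul_of_mem_Icc (t := 1) hg_meas.aemeasurable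
      (ae_of_all _ fun ω => abs_le.mp (hg_bdd ω))
  have hgibbs := integral_mul_sub_log_integral_exp_le he hq_pos hq_one
    (hq.mul_bdd hg_meas.aestronglyMeasurable hg_norm) hq_ent
  subst hw hZ
  rw [integral_mul_log_tilted he (he.bdd_mul hg_meas.aestronglyMeasurable hg_norm), hfoc]
  rw [hqg] at hgibbs
  simpa using hgibbs
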